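/- With Ω, T, p, q as above, for every input x and every 1 ≤ t ≤ T: A_t(x) ≤ 2 Σ_{k=1}^{t−1} E_k(x) + E_t(x), where A_t(x) = E_{y∼p_{≤T}(·|x)}[ 1{t ≤ |y|} · D_TVD(p(·|x,y_{<t}), q(·|x,y_{<t})) ] and E_k(x) = E_{y∼q_{≤T}(·|x)}[ 1{k ≤ |y|} · D_TVD(p(·|x,y_{<k}), q(·|x,y_{<k})) ]. -/

import Mathlib

open Finset

/-- Total variation distance between two distributions on a finite set. -/
noncomputable def tvd {Ω : Type*} [Fintype Ω] (P Q : Ω → ℝ) : ℝ :=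
  (1 / 2) * ∑ c, |P c - Q c|

/-- `IsDist P`: `P` is a probability distribution on the finite set `Ω`. -/
def IsDist {Ω : Type*} [Fintype Ω] (P : Ω → ℝ) : Prop :=
  (∀ c, 0 ≤ P c) ∧ ∑ c, P c = 1

/-- A next-token model: for every input `x` and every prefix, a next-token distribution. -/
def IsModel {Ω ι : Type*} [Fintype Ω] (p : ι → List Ω → Ω → ℝ) : Prop :=
  ∀ x pre, IsDist (p x pre)

/-- `Stopped eos T y`: `y` is a completed output sequence for horizon `T`: it is nonempty,
has length at most `T`, contains the end-of-sequence token at no position except possibly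
the last one, and either ends with `eos` or has length exactly `T`. -/
def Stopped {Ω : Type*} [DecidableEq Ω] (eos : Ω) (T : ℕ) (y : List Ω) : Prop :=
  y ≠ [] ∧ y.length ≤ T ∧ eos ∉ y.dropLast ∧ (y.getLast? = some eos ∨ y.length = T)

open Classical in
/-- Probability that autoregressive sampling — where the next-token distribution used to
sample the `(t+1)`-st token given the length-`t` prefix `pre` is `ms t pre`, with horizon `T`
and end-of-sequence token `eos` — outputs exactly the sequence `y`. -/
noncomputable def seqProb {Ω : Type*} [Fintype Ω] [DecidableEq Ω] (eos : Ω)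
    (ms : ℕ → List Ω → Ω → ℝ) (T : ℕ) (y : List Ω) : ℝ :=
  if Stopped eos T y then ∏ t ∈ Finset.range y.length, ms t (y.take t) (y.getD t eos) else 0

/-- Expectation of `f` under the induced distribution over output sequences. -/
noncomputable def seqExp {Ω : Type*} [Fintype Ω] [DecidableEq Ω] (eos : Ω)
    (ms : ℕ → List Ω → Ω → ℝ) (T : ℕ) (f : List Ω → ℝ) : ℝ :=
  ∑ n ∈ Finset.Icc 1 T, ∑ v : Fin n → Ω, seqProb eos ms T (List.ofFn v) * f (List.ofFn v)

/-- Expectation under `p_{≤T}(·|x)`, the output-sequence distribution of the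
autoregressive model with next-token distributions `p`. -/
noncomputable def modelExp {Ω ι : Type*} [Fintype Ω] [DecidableEq Ω] (eos : Ω)
    (p : ι → List Ω → Ω → ℝ) (x : ι) (T : ℕ) (f : List Ω → ℝ) : ℝ :=
  seqExp eos (fun _ pre => p x pre) T f

/-- Expectation under the mixed-model sequence distribution `M(x, ∅, z)`, where the letter
`z_t` (`true` = letter `P`, i.e. target model `p`; `false` = letter `Q`, i.e. draft model `q`)
selects the model used to sample the `t`-th token, with horizon `|z|` and empty prefix. -/
noncomputable def mixExp {Ω ι : Type*} [Fintype Ω] [DecidableEq Ω] (eos : Ω)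
    (p q : ι → List Ω → Ω → ℝ) (x : ι) (z : List Bool) (f : List Ω → ℝ) : ℝ :=
  seqExp eos (fun t pre => if z.getD t true then p x pre else q x pre) z.length f

/-- `Σ_{t=1}^{|y|} D_TVD(p(·|x, y_{<t}), q(·|x, y_{<t}))`. -/
noncomputable def totalLoss {Ω ι : Type*} [Fintype Ω] (p q : ι → List Ω → Ω → ℝ)
    (x : ι) (y : List Ω) : ℝ :=
  ∑ t ∈ Finset.range y.length, tvd (p x (y.take t)) (q x (y.take t))

/-- `1{t ≤ |y|} · D_TVD(p(·|x, y_{<t}), q(·|x, y_{<t}))` for a (1-indexed) position `t`. -/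
noncomputable def stepLoss {Ω ι : Type*} [Fintype Ω] (p q : ι → List Ω → Ω → ℝ)
    (x : ι) (t : ℕ) (y : List Ω) : ℝ :=
  if t ≤ y.length then tvd (p x (y.take (t - 1))) (q x (y.take (t - 1))) else 0

/-- Expected output length `L_p(x) = E_{y∼p_{≤T}(·|x)}[|y|]` of the target model. -/
noncomputable def Lp {Ω ι : Type*} [Fintype Ω] [DecidableEq Ω] (eos : Ω)
    (p : ι → List Ω → Ω → ℝ) (x : ι) (T : ℕ) : ℝ :=
  modelExp eos p x T (fun y => (y.length : ℝ))

/-- Sequence-level acceptance rate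
`α(x) = 1 − E_{y∼p_{≤T}(·|x)}[Σ_{t=1}^{|y|} D_TVD(p(·|x,y_{<t}), q(·|x,y_{<t}))] / L_p(x)`. -/
noncomputable def acceptRate {Ω ι : Type*} [Fintype Ω] [DecidableEq Ω] (eos : Ω)
    (p q : ι → List Ω → Ω → ℝ) (x : ι) (T : ℕ) : ℝ :=
  1 - modelExp eos p x T (totalLoss p q x) / Lp eos p x T

/-- On-policy distillation loss
`ε(x) = E_{y∼q_{≤T}(·|x)}[(1/|y|) Σ_{t=1}^{|y|} D_TVD(p(·|x,y_{<t}), q(·|x,y_{<t}))]`. -/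
noncomputable def onPolicyLoss {Ω ι : Type*} [Fintype Ω] [DecidableEq Ω] (eos : Ω)
    (p q : ι → List Ω → Ω → ℝ) (x : ι) (T : ℕ) : ℝ :=
  modelExp eos q x T (fun y => (1 / (y.length : ℝ)) * totalLoss p q x y)

/-- `A_t(x) = E_{y∼p_{≤T}(·|x)}[1{t ≤ |y|} · D_TVD(p(·|x,y_{<t}), q(·|x,y_{<t}))]`. -/
noncomputable def Aterm {Ω ι : Type*} [Fintype Ω] [DecidableEq Ω] (eos : Ω)
    (p q : ι → List Ω → Ω → ℝ) (x : ι) (T t : ℕ) : ℝ :=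
  modelExp eos p x T (stepLoss p q x t)

/-- `E_t(x) = E_{y∼q_{≤T}(·|x)}[1{t ≤ |y|} · D_TVD(p(·|x,y_{<t}), q(·|x,y_{<t}))]`. -/
noncomputable def Eterm {Ω ι : Type*} [Fintype Ω] [DecidableEq Ω] (eos : Ω)
    (p q : ι → List Ω → Ω → ℝ) (x : ι) (T t : ℕ) : ℝ :=
  modelExp eos q x T (stepLoss p q x t)

/-!
Write `P(u)`, `Q(u)` for the probabilities that `p` and `q` start their output with the
eos-free word `u`, and `τ(u) = D_TVD(p(·|x,u), q(·|x,u)) ≤ 1`. For a stopped sequence `y` and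
`k < T`, the length-`k` prefix of `y` is eos-free exactly when `k < |y|`, and the stopped
sequences extending an eos-free `u` carry total mass `P(u)`; hence `A_t = Σ_u P(u) τ(u)` and
`E_t = Σ_u Q(u) τ(u)`, summed over eos-free words of length `t - 1`. So
`A_t ≤ E_t + Σ_u |P(u) - Q(u)|`, and this last sum telescopes over the length: by
`|a p(c) - b q(c)| ≤ |a - b| p(c) + b |p(c) - q(c)|`, appending one token to the words of
length `k` increases it by at most `2 E_{k+1}`.
-/

lemma abs_mul_sub_mul_le {a b x y : ℝ} (hx : 0 ≤ x) (hb : 0 ≤ b) :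
    |a * x - b * y| ≤ |a - b| * x + b * |x - y| :=
  calc |a * x - b * y| = |(a - b) * x + b * (x - y)| := by ring_nf
    _ ≤ |(a - b) * x| + |b * (x - y)| := abs_add_le _ _
    _ = |a - b| * x + b * |x - y| := by rw [abs_mul, abs_mul, abs_of_nonneg hx, abs_of_nonneg hb]

lemma mul_le_mul_add_abs_sub {a b τ : ℝ} (hτ₀ : 0 ≤ τ) (hτ₁ : τ ≤ 1) :
    a * τ ≤ b * τ + |a - b| := by
  nlinarith [le_abs_self (a - b), abs_nonneg (a - b)]

section TotalVariation

variable {Ω : Type*} [Fintype Ω]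

lemma tvd_nonneg (P Q : Ω → ℝ) : 0 ≤ tvd P Q := by
  unfold tvd; positivity

lemma tvd_le_one {P Q : Ω → ℝ} (hP : IsDist P) (hQ : IsDist Q) : tvd P Q ≤ 1 := by
  have : ∑ c, |P c - Q c| ≤ ∑ c, (P c + Q c) :=
    sum_le_sum fun c _ => (abs_sub _ _).trans_eq <| by
      rw [abs_of_nonneg (hP.1 c), abs_of_nonneg (hQ.1 c)]
  rw [sum_add_distrib, hP.2, hQ.2] at this
  unfold tvd; linarith

lemma sum_abs_mul_sub_mul_le {P Q : Ω → ℝ} (hP : IsDist P) (a : ℝ) {b : ℝ} (hb : 0 ≤ b) :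
    ∑ c, |a * P c - b * Q c| ≤ |a - b| + 2 * b * tvd P Q :=
  calc ∑ c, |a * P c - b * Q c| ≤ ∑ c, (|a - b| * P c + b * |P c - Q c|) :=
        sum_le_sum fun c _ => abs_mul_sub_mul_le (hP.1 c) hb
    _ = |a - b| + 2 * b * tvd P Q := by
        rw [sum_add_distrib, ← mul_sum, ← mul_sum, hP.2, tvd]; ring

end TotalVariation

section Words

variable {α : Type*}

lemma List.append_singleton_prefix_iff {w y : List α} {c : α} :
    w ++ [c] <+: y ↔ w <+: y ∧ y[w.length]? = some c := by
  constructor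
  · rintro ⟨r, rfl⟩
    simp
  · rintro ⟨⟨r, rfl⟩, h⟩
    cases r with
    | nil => simp at h
    | cons d r =>
      obtain rfl : d = c := by simpa using h
      exact ⟨r, by simp⟩

lemma List.ofFn_snoc {j : ℕ} (v : Fin j → α) (c : α) :
    List.ofFn (Fin.snoc v c : Fin (j + 1) → α) = List.ofFn v ++ [c] := by
  rw [List.ofFn_succ']
  simp

variable [Fintype α] [DecidableEq α]
lemma sum_ite_ofFn_eq {n : ℕ} (w : List α) (a : ℝ) :
    ∑ v : Fin n → α, (if List.ofFn v = w then a else 0) = if w.length = n then a else 0 := by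
  split_ifs with hn
  · subst hn
    have hv (v : Fin w.length → α) : List.ofFn v = w ↔ v = w.get :=
      ⟨fun h => List.ofFn_injective (h.trans (List.ofFn_get w).symm),
        fun h => h ▸ List.ofFn_get w⟩
    simp_rw [hv, Fintype.sum_ite_eq']
  · refine sum_eq_zero fun v _ => if_neg ?_
    rintro rfl
    exact hn (List.length_ofFn)

lemma sum_ite_ofFn_prefix {n : ℕ} (y : List α) (g : List α → ℝ) :
    ∑ v : Fin n → α, (if List.ofFn v <+: y then g (List.ofFn v) else 0) =
      if n ≤ y.length then g (y.take n) else 0 := by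
  have hv : ∀ v : Fin n → α, List.ofFn v <+: y ↔ List.ofFn v = y.take n := fun v => by
    rw [List.prefix_iff_eq_take, List.length_ofFn]
  calc ∑ v : Fin n → α, (if List.ofFn v <+: y then g (List.ofFn v) else 0)
      = ∑ v : Fin n → α, (if List.ofFn v = y.take n then g (y.take n) else 0) :=
        sum_congr rfl fun v _ => by simp only [hv]; split_ifs with h <;> simp only [h]
    _ = if n ≤ y.length then g (y.take n) else 0 := by
        simp only [sum_ite_ofFn_eq, List.length_take, min_eq_left_iff]

end Words

section Stopping

variable {Ω : Type*} [DecidableEq Ω] {eos : Ω} {T : ℕ}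

lemma Stopped.eq_of_prefix {w y : List Ω} (hw : Stopped eos T w) (hy : Stopped eos T y)
    (h : w <+: y) : w = y := by
  obtain ⟨r, rfl⟩ := h
  by_contra hne
  have hr : r ≠ [] := by rintro rfl; exact hne (List.append_nil w).symm
  rcases hw.2.2.2 with hlast | hlen
  · apply hy.2.2.1
    rw [List.dropLast_append_of_ne_nil hr]
    exact List.mem_append_left _ (List.mem_of_getLast? hlast)
  · have := hy.2.1
    rw [List.length_append] at this
    exact hr (List.eq_nil_of_length_eq_zero (by omega))

lemma not_stopped_of_eos_not_mem {w : List Ω} (hw : eos ∉ w) (hlt : w.length < T) :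
    ¬ Stopped eos T w := by
  rintro ⟨-, -, -, hlast | hlen⟩
  · exact hw (List.mem_of_getLast? hlast)
  · omega

lemma stopped_append_eos {w : List Ω} (hw : eos ∉ w) (hlt : w.length < T) :
    Stopped eos T (w ++ [eos]) :=
  ⟨by simp, by simpa using hlt, by rwa [List.dropLast_concat], Or.inl List.getLast?_concat⟩

lemma stopped_of_length_eq {w : List Ω} (hT : 0 < T) (hw : eos ∉ w) (hlen : w.length = T) :
    Stopped eos T w :=
  ⟨List.ne_nil_of_length_pos (hlen ▸ hT), hlen.le, fun h => hw (List.dropLast_subset _ h), Or.inr hlen⟩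

lemma Stopped.eos_not_mem_take_iff {y : List Ω} (hy : Stopped eos T y) {j : ℕ} (hj : j < T)
    (hjy : j ≤ y.length) : eos ∉ y.take j ↔ j < y.length := by
  refine ⟨fun h => hjy.lt_of_ne ?_, fun h => ?_⟩
  · rintro rfl
    rw [List.take_length] at h
    exact not_stopped_of_eos_not_mem h hj hy
  · have hfree := hy.2.2.1
    rw [List.dropLast_eq_take] at hfree
    exact fun hmem => hfree ((List.take_prefix_take_left (by omega)).subset hmem)

end Stopping

section PrefixProb

variable {Ω : Type*} (eos : Ω) (ms : ℕ → List Ω → Ω → ℝ)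

def prefixProb (w : List Ω) : ℝ :=
  ∏ s ∈ range w.length, ms s (w.take s) (w.getD s eos)

@[simp]
lemma prefixProb_nil : prefixProb eos ms [] = 1 := by
  simp [prefixProb]

lemma prefixProb_append_singleton (w : List Ω) (c : Ω) :
    prefixProb eos ms (w ++ [c]) = prefixProb eos ms w * ms w.length w c := by
  rw [prefixProb, List.length_append, List.length_singleton, prod_range_succ, prefixProb]
  congr 1
  · refine prod_congr rfl fun s hs => ?_
    rw [mem_range] at hs
    rw [List.take_append_of_le_length hs.le, List.getD_append _ _ _ _ hs]
  · simp

variable {eos ms}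

lemma prefixProb_nonneg [Fintype Ω] (hms : ∀ s pre, IsDist (ms s pre)) (w : List Ω) :
    0 ≤ prefixProb eos ms w :=
  prod_nonneg fun s _ => (hms s _).1 _

end PrefixProb

noncomputable def seqSum {Ω : Type*} [Fintype Ω] (T : ℕ) (g : List Ω → ℝ) : ℝ :=
  ∑ n ∈ Icc 1 T, ∑ v : Fin n → Ω, g (List.ofFn v)

section SeqSum

variable {Ω : Type*} [Fintype Ω] {T : ℕ}

lemma seqSum_sum {ι : Type*} (s : Finset ι) (g : ι → List Ω → ℝ) :
    seqSum T (fun y => ∑ i ∈ s, g i y) = ∑ i ∈ s, seqSum T (g i) := by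
  unfold seqSum
  rw [sum_comm]
  exact sum_congr rfl fun n _ => sum_comm

lemma seqSum_mul_const (g : List Ω → ℝ) (a : ℝ) :
    seqSum T (fun y => g y * a) = seqSum T g * a := by
  simp only [seqSum, sum_mul]

lemma seqSum_ite_eq [DecidableEq Ω] {w : List Ω} (hne : w ≠ []) (hlen : w.length ≤ T) (a : ℝ) :
    seqSum T (fun y => if y = w then a else 0) = a := by
  have hw : w.length ∈ Icc 1 T := mem_Icc.2 ⟨List.length_pos_iff.2 hne, hlen⟩
  simp only [seqSum, sum_ite_ofFn_eq, sum_ite_eq, if_pos hw]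

end SeqSum

section PrefixMass

variable {Ω : Type*} [Fintype Ω] [DecidableEq Ω] {eos : Ω} {ms : ℕ → List Ω → Ω → ℝ} {T : ℕ}

lemma seqProb_of_stopped {y : List Ω} (hy : Stopped eos T y) :
    seqProb eos ms T y = prefixProb eos ms y := by
  classical
  rw [seqProb, if_pos hy, prefixProb]

lemma seqProb_of_not_stopped {y : List Ω} (hy : ¬ Stopped eos T y) : seqProb eos ms T y = 0 := by
  rw [seqProb, if_neg hy]

lemma seqExp_eq_seqSum (f : List Ω → ℝ) :
    seqExp eos ms T f = seqSum T (fun y => seqProb eos ms T y * f y) :=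
  rfl

variable (eos ms T) in
noncomputable def prefixMass (w : List Ω) : ℝ :=
  seqSum T fun y => if w <+: y then seqProb eos ms T y else 0

lemma prefixMass_of_stopped {w : List Ω} (hw : Stopped eos T w) :
    prefixMass eos ms T w = prefixProb eos ms w := by
  have h (y : List Ω) : (if w <+: y then seqProb eos ms T y else 0) =
      if y = w then prefixProb eos ms w else 0 := by
    by_cases hy : Stopped eos T y
    · have : w <+: y ↔ y = w := ⟨fun h => (hw.eq_of_prefix hy h).symm, fun h => h ▸ List.prefix_rfl⟩
      simp only [this]
      split_ifs with h
      · rw [h, seqProb_of_stopped hw]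
      · rfl
    · rw [seqProb_of_not_stopped hy, ite_self, if_neg]
      rintro rfl
      exact hy hw
  simp only [prefixMass, h]
  exact seqSum_ite_eq hw.1 hw.2.1 _

lemma prefixMass_eq_sum_append {w : List Ω} (hw : ¬ Stopped eos T w) :
    prefixMass eos ms T w = ∑ c, prefixMass eos ms T (w ++ [c]) := by
  have h (y : List Ω) : (if w <+: y then seqProb eos ms T y else 0) =
      ∑ c, if w ++ [c] <+: y then seqProb eos ms T y else 0 := by
    by_cases hpre : w <+: y
    · by_cases hlt : w.length < y.length
      · simp [hpre, List.append_singleton_prefix_iff, List.getElem?_eq_getElem hlt]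
      · obtain rfl := hpre.eq_of_length_le (not_lt.1 hlt)
        simp [seqProb_of_not_stopped hw]
    · simp [hpre, List.append_singleton_prefix_iff]
  simp only [prefixMass, h]
  exact seqSum_sum _ _

theorem prefixMass_eq_prefixProb (hms : ∀ s pre, IsDist (ms s pre)) (hT : 0 < T) {w : List Ω}
    (hw : eos ∉ w) (hlen : w.length ≤ T) : prefixMass eos ms T w = prefixProb eos ms w := by
  rcases hlen.eq_or_lt with hfull | hlt
  · exact prefixMass_of_stopped (stopped_of_length_eq hT hw hfull)
  have hstep (c : Ω) : prefixMass eos ms T (w ++ [c]) = prefixProb eos ms (w ++ [c]) := by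
    by_cases hc : c = eos
    · subst hc
      exact prefixMass_of_stopped (stopped_append_eos hw hlt)
    · exact prefixMass_eq_prefixProb hms hT (by simp [hw, Ne.symm hc]) (by simpa using hlt)
  simp only [prefixMass_eq_sum_append (not_stopped_of_eos_not_mem hw hlt), hstep,
    prefixProb_append_singleton, ← mul_sum, (hms _ _).2, mul_one]
termination_by T - w.length

end PrefixMass

section Marginal

variable {Ω : Type*} [Fintype Ω] [DecidableEq Ω]

def eosFreeWords (eos : Ω) (j : ℕ) : Finset (Fin j → Ω) :=
  {u | eos ∉ List.ofFn u}

variable {eos : Ω}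

lemma seqProb_mul_ite_lt_length {ms : ℕ → List Ω → Ω → ℝ} {T j : ℕ} (hj : j < T)
    (F : List Ω → ℝ) (y : List Ω) :
    seqProb eos ms T y * (if j < y.length then F (y.take j) else 0) =
      ∑ u ∈ eosFreeWords eos j,
        (if List.ofFn u <+: y then seqProb eos ms T y else 0) * F (List.ofFn u) := by
  have hswap (u : Fin j → Ω) : (if eos ∉ List.ofFn u then
      (if List.ofFn u <+: y then seqProb eos ms T y else 0) * F (List.ofFn u) else 0) =
      if List.ofFn u <+: y then
        (if eos ∉ List.ofFn u then seqProb eos ms T y * F (List.ofFn u) else 0) else 0 := by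
    split_ifs <;> simp
  have hprefix := sum_ite_ofFn_prefix (n := j) y
    fun w => if eos ∉ w then seqProb eos ms T y * F w else 0
  rw [eosFreeWords, sum_filter]
  simp only [hswap, hprefix]
  by_cases hy : Stopped eos T y
  · by_cases hjy : j ≤ y.length
    · simp only [if_pos hjy, hy.eos_not_mem_take_iff hj hjy, mul_ite, mul_zero]
    · rw [if_neg hjy, if_neg (by omega), mul_zero]
  · simp [seqProb_of_not_stopped hy]

theorem seqExp_ite_lt_length {ms : ℕ → List Ω → Ω → ℝ} (hms : ∀ s pre, IsDist (ms s pre))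
    {T j : ℕ} (hj : j < T) (F : List Ω → ℝ) :
    seqExp eos ms T (fun y => if j < y.length then F (y.take j) else 0) =
      ∑ u ∈ eosFreeWords eos j, prefixProb eos ms (List.ofFn u) * F (List.ofFn u) := by
  simp only [seqExp_eq_seqSum, seqProb_mul_ite_lt_length hj, seqSum_sum, seqSum_mul_const]
  refine sum_congr rfl fun u hu => ?_
  rw [eosFreeWords, mem_filter] at hu
  rw [← prefixMass, prefixMass_eq_prefixProb hms (by omega) hu.2 (by simpa using hj.le)]

end Marginal

section Telescope

variable {Ω : Type*} [Fintype Ω] [DecidableEq Ω] {eos : Ω}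

lemma sum_eosFreeWords_succ (j : ℕ) (g : List Ω → ℝ) :
    ∑ u ∈ eosFreeWords eos (j + 1), g (List.ofFn u) =
      ∑ u ∈ eosFreeWords eos j, ∑ c ∈ univ.erase eos, g (List.ofFn u ++ [c]) := by
  rw [eosFreeWords, eosFreeWords, sum_filter, sum_filter,
    ← (Fin.snocEquiv fun _ => Ω).sum_comp, Fintype.sum_prod_type, sum_comm]
  refine sum_congr rfl fun u _ => ?_
  simp only [Fin.snocEquiv, Equiv.coe_fn_mk, List.ofFn_snoc]
  by_cases hu : eos ∈ List.ofFn u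
  · simp [hu]
  · rw [if_pos hu, ← sum_filter]
    congr 1
    ext c
    simp [hu, eq_comm]

variable {ms ms' : ℕ → List Ω → Ω → ℝ}

lemma sum_abs_prefixProb_sub_succ_le (hms : ∀ s pre, IsDist (ms s pre))
    (hms' : ∀ s pre, IsDist (ms' s pre)) (j : ℕ) :
    ∑ u ∈ eosFreeWords eos (j + 1),
        |prefixProb eos ms (List.ofFn u) - prefixProb eos ms' (List.ofFn u)| ≤
      ∑ u ∈ eosFreeWords eos j,
        |prefixProb eos ms (List.ofFn u) - prefixProb eos ms' (List.ofFn u)| +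
      2 * ∑ u ∈ eosFreeWords eos j,
        prefixProb eos ms' (List.ofFn u) * tvd (ms j (List.ofFn u)) (ms' j (List.ofFn u)) := by
  rw [sum_eosFreeWords_succ j fun w => |prefixProb eos ms w - prefixProb eos ms' w|, mul_sum,
    ← sum_add_distrib]
  refine sum_le_sum fun u _ => ?_
  simp only [prefixProb_append_singleton, List.length_ofFn]
  calc ∑ c ∈ univ.erase eos, |prefixProb eos ms (List.ofFn u) * ms j (List.ofFn u) c -
          prefixProb eos ms' (List.ofFn u) * ms' j (List.ofFn u) c|
      ≤ ∑ c, |prefixProb eos ms (List.ofFn u) * ms j (List.ofFn u) c -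
          prefixProb eos ms' (List.ofFn u) * ms' j (List.ofFn u) c| :=
        sum_le_univ_sum_of_nonneg fun _ => abs_nonneg _
    _ ≤ _ := sum_abs_mul_sub_mul_le (hms _ _) _ (prefixProb_nonneg hms' _)
    _ = _ := by ring

theorem sum_abs_prefixProb_sub_le (hms : ∀ s pre, IsDist (ms s pre))
    (hms' : ∀ s pre, IsDist (ms' s pre)) (j : ℕ) :
    ∑ u ∈ eosFreeWords eos j,
        |prefixProb eos ms (List.ofFn u) - prefixProb eos ms' (List.ofFn u)| ≤
      2 * ∑ k ∈ range j, ∑ u ∈ eosFreeWords eos k,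
        prefixProb eos ms' (List.ofFn u) * tvd (ms k (List.ofFn u)) (ms' k (List.ofFn u)) := by
  induction j with
  | zero => simp
  | succ j ih =>
    have := sum_abs_prefixProb_sub_succ_le (eos := eos) hms hms' j
    rw [sum_range_succ]
    linarith

end Telescope

lemma modelExp_stepLoss_succ {Ω ι : Type*} [Fintype Ω] [DecidableEq Ω] {eos : Ω}
    {r : ι → List Ω → Ω → ℝ} (hr : IsModel r) (p q : ι → List Ω → Ω → ℝ) (x : ι) {T j : ℕ}
    (hj : j < T) :
    modelExp eos r x T (stepLoss p q x (j + 1)) =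
      ∑ u ∈ eosFreeWords eos j,
        prefixProb eos (fun _ => r x) (List.ofFn u) * tvd (p x (List.ofFn u)) (q x (List.ofFn u)) :=
  -- `j + 1 ≤ |y|` unfolds to `j < |y|`, and `j + 1 - 1` reduces to `j`
  seqExp_ite_lt_length (fun _ => hr x) hj fun w => tvd (p x w) (q x w)

theorem Aterm_le_Eterm_sum_general
    {Ω ι : Type*} [Fintype Ω] [DecidableEq Ω] (eos : Ω)
    (T : ℕ)
    (p q : ι → List Ω → Ω → ℝ) (hp : IsModel p) (hq : IsModel q)
    (x : ι) (t : ℕ) (ht1 : 1 ≤ t) (ht2 : t ≤ T) :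
    Aterm eos p q x T t ≤
      2 * (∑ k ∈ Finset.Icc 1 (t - 1), Eterm eos p q x T k) + Eterm eos p q x T t := by
  obtain ⟨j, rfl⟩ : ∃ j, t = j + 1 := ⟨t - 1, by omega⟩
  have hE : ∑ k ∈ Icc 1 j, Eterm eos p q x T k = ∑ k ∈ range j, Eterm eos p q x T (k + 1) := by
    rw [← Finset.Ico_add_one_right_eq_Icc, sum_Ico_eq_sum_range]
    simp [add_comm]
  have hj : j < T := ht2
  have hEterm (k : ℕ) (hk : k < T) : Eterm eos p q x T (k + 1) = _ :=
    modelExp_stepLoss_succ hq p q x hk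
  rw [Nat.add_sub_cancel, hE, Aterm, modelExp_stepLoss_succ hp p q x hj, hEterm j hj,
    sum_congr rfl fun k hk => hEterm k ((mem_range.1 hk).trans hj)]
  have htel := sum_abs_prefixProb_sub_le (eos := eos) (fun _ => hp x) (fun _ => hq x) j
  have hpoint := sum_le_sum fun u (_ : u ∈ eosFreeWords eos j) =>
    mul_le_mul_add_abs_sub (a := prefixProb eos (fun _ => p x) (List.ofFn u))
      (b := prefixProb eos (fun _ => q x) (List.ofFn u))
      (tvd_nonneg (p x (List.ofFn u)) (q x (List.ofFn u))) (tvd_le_one (hp x _) (hq x _))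
  rw [sum_add_distrib] at hpoint
  linarith

/-- **DistillSpec, Lemma 4.** For `1 ≤ t ≤ T`,
`A_t(x) ≤ 2 Σ_{k=1}^{t−1} E_k(x) + E_t(x)`. -/
theorem Aterm_le_Eterm_sum
    {Ω ι : Type*} [Fintype Ω] [DecidableEq Ω] (eos : Ω)
    (T : ℕ) (hT : 1 ≤ T)
    (p q : ι → List Ω → Ω → ℝ) (hp : IsModel p) (hq : IsModel q)
    (x : ι) (t : ℕ) (ht1 : 1 ≤ t) (ht2 : t ≤ T) :
    Aterm eos p q x T t ≤
      2 * (∑ k ∈ Finset.Icc 1 (t - 1), Eterm eos p q x T k) + Eterm eos p q x T t :=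
  Aterm_le_Eterm_sum_general eos T p q hp hq x t ht1 ht2
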